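/- arXiv:1405.1276 — 2 statements merged into one kernel-verified Lean document; each statement's English description precedes it below -/
import Mathlib

section
/- Let λ₂ be a Borel probability measure on E₂ written as a convolution λ₂ = Tλ₁ * ρ, where T : E₁ → E₂ is Borel measurable and ρ is a Borel probability measure on E₂. Then for each 1 ≤ p < ∞, the operator P_T defined by (P_T f)(x) = ∫_{E₂} f(Tx + y) dρ(y) is a linear contraction from L^p(E₂, λ₂) to L^p(E₁, λ₁). -/
open MeasureTheory ENNReal

/-- Convolution of two Borel measures: pushforward of the product under addition. -/
noncomputable def mconv {E : Type*} [MeasurableSpace E] [Add E]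
    (μ ν : Measure E) : Measure E :=
  (μ.prod ν).map (fun p => p.1 + p.2)

/-! Pushing `l₁ ⊗ ρ` forward along `(x, y) ↦ T x + y` gives `l₂`, so `f ↦ f (T x + y)` is an
isometry `L^p(l₂) → L^p(l₁ ⊗ ρ)`, and `P_T` is this isometry followed by integrating out `y`.
Integrating out a probability variable contracts `L^p` norms, by Jensen's inequality
`‖∫ g dρ‖^p ≤ ∫ ‖g‖^p dρ` on each fibre and Tonelli. -/

section PartialIntegral

variable {α β E : Type*} [MeasurableSpace α] [MeasurableSpace β]
  [NormedAddCommGroup E] [NormedSpace ℝ E] {μ : Measure α} {ν : Measure β}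
  [IsProbabilityMeasure ν] {p : ℝ≥0∞}

theorem enorm_integral_le_eLpNorm {g : β → E}
    (hg : AEStronglyMeasurable g ν) (hp : 1 ≤ p) : ‖∫ y, g y ∂ν‖ₑ ≤ eLpNorm g p ν :=
  calc ‖∫ y, g y ∂ν‖ₑ ≤ ∫⁻ y, ‖g y‖ₑ ∂ν := enorm_integral_le_lintegral_enorm g
    _ = eLpNorm g 1 ν := eLpNorm_one_eq_lintegral_enorm.symm
    _ ≤ eLpNorm g p ν := eLpNorm_le_eLpNorm_of_exponent_le hp hg

variable {F : α × β → E}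

theorem eLpNorm_integral_prod_right_le (hF : AEStronglyMeasurable F (μ.prod ν)) (hp : 1 ≤ p) :
    eLpNorm (fun x => ∫ y, F (x, y) ∂ν) p μ ≤ eLpNorm F p (μ.prod ν) := by
  rcases eq_or_ne p ∞ with rfl | hpt
  · simp only [eLpNorm_exponent_top]
    refine eLpNormEssSup_le_of_ae_enorm_bound ?_
    filter_upwards [hF.prodMk_left,
      Measure.ae_ae_of_ae_prod (ae_le_eLpNormEssSup (f := F) (μ := μ.prod ν))] with x hx hbound
    calc ‖∫ y, F (x, y) ∂ν‖ₑ ≤ eLpNorm (fun y => F (x, y)) ∞ ν := enorm_integral_le_eLpNorm hx hp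
      _ ≤ eLpNormEssSup F (μ.prod ν) := eLpNormEssSup_le_of_ae_enorm_bound hbound
  have hp0 : p ≠ 0 := (zero_lt_one.trans_le hp).ne'
  have hpos : 0 < p.toReal := ENNReal.toReal_pos hp0 hpt
  rw [eLpNorm_eq_lintegral_rpow_enorm_toReal hp0 hpt,
    eLpNorm_eq_lintegral_rpow_enorm_toReal hp0 hpt]
  gcongr ?_ ^ _
  calc ∫⁻ x, ‖∫ y, F (x, y) ∂ν‖ₑ ^ p.toReal ∂μ
      ≤ ∫⁻ x, ∫⁻ y, ‖F (x, y)‖ₑ ^ p.toReal ∂ν ∂μ := lintegral_mono_ae ?_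
    _ = ∫⁻ q, ‖F q‖ₑ ^ p.toReal ∂μ.prod ν := (lintegral_prod _ (hF.enorm.pow_const _)).symm
  filter_upwards [hF.prodMk_left] with x hx
  calc ‖∫ y, F (x, y) ∂ν‖ₑ ^ p.toReal ≤ eLpNorm (fun y => F (x, y)) p ν ^ p.toReal := by
        gcongr; exact enorm_integral_le_eLpNorm hx hp
    _ = ∫⁻ y, ‖F (x, y)‖ₑ ^ p.toReal ∂ν := by
        rw [eLpNorm_eq_lintegral_rpow_enorm_toReal hp0 hpt, ← ENNReal.rpow_mul,
          one_div_mul_cancel hpos.ne', ENNReal.rpow_one]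

theorem MeasureTheory.MemLp.integral_prod_right (hF : MemLp F p (μ.prod ν)) (hp : 1 ≤ p) :
    MemLp (fun x => ∫ y, F (x, y) ∂ν) p μ :=
  ⟨hF.1.integral_prod_right', (eLpNorm_integral_prod_right_le hF.1 hp).trans_lt hF.2⟩

end PartialIntegral

section Convolution

variable {α E : Type*} [MeasurableSpace α] [MeasurableSpace E] [Add E]
  {μ : Measure α} {ν : Measure E} [SFinite μ] [SFinite ν] {T : α → E}

theorem mconv_map_eq_map_prod (hT : AEMeasurable T μ)
    (hadd : AEMeasurable (fun q : E × E => q.1 + q.2) ((μ.map T).prod ν)) :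
    mconv (μ.map T) ν = (μ.prod ν).map (fun q => T q.1 + q.2) := by
  set T' := hT.mk T
  have hmap : μ.map T = μ.map T' := Measure.map_congr hT.ae_eq_mk
  have hprod : (μ.map T').prod ν = (μ.prod ν).map (Prod.map T' id) := by
    simpa using Measure.map_prod_map μ ν hT.measurable_mk measurable_id
  have hS : (μ.prod ν).map (fun q => T q.1 + q.2) = (μ.prod ν).map (fun q => T' q.1 + q.2) :=
    Measure.map_congr <| by
      filter_upwards [Measure.quasiMeasurePreserving_fst.ae hT.ae_eq_mk] with q hq
      rw [hq]
  rw [hmap, hprod] at hadd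
  rw [mconv, hS, hmap, hprod, AEMeasurable.map_map_of_aemeasurable hadd
    (hT.measurable_mk.prodMap measurable_id).aemeasurable]
  rfl

theorem eq_map_prod_of_mconv_map_eq {κ : Measure E} (hskew : mconv (μ.map T) ν = κ)
    (hκ : κ ≠ 0) : κ = (μ.prod ν).map (fun q => T q.1 + q.2) := by
  -- `Measure.map` along a map that is not a.e.-measurable is `0`.
  have hne : mconv (μ.map T) ν ≠ 0 := hskew ▸ hκ
  have hadd := AEMeasurable.of_map_ne_zero hne
  have hT : AEMeasurable T μ := by
    refine AEMeasurable.of_map_ne_zero fun h => hne ?_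
    rw [mconv, h, Measure.zero_prod, Measure.map_zero]
  rw [← hskew, mconv_map_eq_map_prod hT hadd]

end Convolution

theorem skew_transition_contraction_general
    {E₁ E₂ : Type*}
    [MeasurableSpace E₁]
    [NormedAddCommGroup E₂]
    [MeasurableSpace E₂]
    (l₁ : Measure E₁) (l₂ ρ : Measure E₂)
    [IsProbabilityMeasure l₁] [IsProbabilityMeasure l₂] [IsProbabilityMeasure ρ]
    (T : E₁ → E₂)
    (hskew : mconv (l₁.map T) ρ = l₂)
    (p : ℝ≥0∞) (hp : 1 ≤ p)
    (f : E₂ → ℝ) (hfp : MemLp f p l₂) :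
    MemLp (fun x => ∫ y, f (T x + y) ∂ρ) p l₁ ∧
      eLpNorm (fun x => ∫ y, f (T x + y) ∂ρ) p l₁ ≤ eLpNorm f p l₂ ∧
      (∀ (g : E₂ → ℝ), Measurable g → MemLp g p l₂ → ∀ (a : ℝ),
        ∀ᵐ x ∂l₁, (∫ y, (a • f + g) (T x + y) ∂ρ)
          = a * (∫ y, f (T x + y) ∂ρ) + ∫ y, g (T x + y) ∂ρ) := by
  set S : E₁ × E₂ → E₂ := fun q => T q.1 + q.2
  have hl₂ : l₂ = (l₁.prod ρ).map S :=
    eq_map_prod_of_mconv_map_eq hskew (IsProbabilityMeasure.ne_zero l₂)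
  have hS : AEMeasurable S (l₁.prod ρ) :=
    AEMeasurable.of_map_ne_zero (hl₂ ▸ IsProbabilityMeasure.ne_zero l₂)
  have memLp_comp : ∀ h : E₂ → ℝ, MemLp h p l₂ → MemLp (h ∘ S) p (l₁.prod ρ) := fun h hh =>
    (hl₂ ▸ hh).comp_of_map hS
  have hF := memLp_comp f hfp
  refine ⟨hF.integral_prod_right hp, ?_, fun g _ hgp a => ?_⟩
  · calc eLpNorm (fun x => ∫ y, f (T x + y) ∂ρ) p l₁ ≤ eLpNorm (f ∘ S) p (l₁.prod ρ) :=
          eLpNorm_integral_prod_right_le (F := f ∘ S) hF.1 hp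
      _ = eLpNorm f p l₂ := by rw [hl₂, eLpNorm_map_measure (hl₂ ▸ hfp.1) hS]
  · filter_upwards [(hF.integrable hp).prod_right_ae,
      ((memLp_comp g hgp).integrable hp).prod_right_ae] with x hfx hgx
    simp only [Pi.add_apply, Pi.smul_apply, smul_eq_mul]
    exact (integral_add (hfx.const_mul a) hgx).trans (congrArg₂ _ (integral_const_mul a _) rfl)

/-- If `T l₁ * ρ = l₂`, then for `1 ≤ p < ∞` the operator
`P_T f (x) = ∫ f (T x + y) dρ(y)` is a linear contraction from
`L^p(E₂, l₂)` to `L^p(E₁, l₁)`. -/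
theorem skew_transition_contraction
    {E₁ E₂ : Type*}
    [NormedAddCommGroup E₁] [NormedSpace ℝ E₁] [CompleteSpace E₁]
    [MeasurableSpace E₁] [BorelSpace E₁]
    [NormedAddCommGroup E₂] [NormedSpace ℝ E₂] [CompleteSpace E₂]
    [MeasurableSpace E₂] [BorelSpace E₂]
    (l₁ : Measure E₁) (l₂ ρ : Measure E₂)
    [IsProbabilityMeasure l₁] [IsProbabilityMeasure l₂] [IsProbabilityMeasure ρ]
    (T : E₁ → E₂) (hT : Measurable T)
    (hskew : mconv (l₁.map T) ρ = l₂)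
    (p : ℝ≥0∞) (hp : 1 ≤ p) (hp' : p ≠ ∞)
    (f : E₂ → ℝ) (hf : Measurable f) (hfp : MemLp f p l₂) :
    MemLp (fun x => ∫ y, f (T x + y) ∂ρ) p l₁ ∧
      eLpNorm (fun x => ∫ y, f (T x + y) ∂ρ) p l₁ ≤ eLpNorm f p l₂ ∧
      (∀ (g : E₂ → ℝ), Measurable g → MemLp g p l₂ → ∀ (a : ℝ),
        ∀ᵐ x ∂l₁, (∫ y, (a • f + g) (T x + y) ∂ρ)
          = a * (∫ y, f (T x + y) ∂ρ) + ∫ y, g (T x + y) ∂ρ) :=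
  skew_transition_contraction_general l₁ l₂ ρ T hskew p hp f hfp
end

section
/- For the signed measure ν = 2δ₁ + 2δ₂ − δ₃ + 2δ₄ + 2δ₅ on ℤ, the convolution square ν*² equals 4δ₂ + 8δ₃ + 4δ₅ + 17δ₆ + 4δ₇ + 8δ₉ + 4δ₁₀, and in particular ν*² is a non-negative measure. -/
open AddMonoidAlgebra

/-! Writing `δₙ = Tⁿ`, `ν` is the Laurent polynomial `2T + 2T² − T³ + 2T⁴ + 2T⁵`, so `ν*²` is
its square and is expanded by `ring` once every `T n` is expressed as a power of `T 1`;
all seven resulting coefficients are non-negative. -/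

/-- The signed measure `ν = 2δ₁ + 2δ₂ − δ₃ + 2δ₄ + 2δ₅` on `ℤ`, viewed as a
finitely supported function with convolution given by multiplication in the
`AddMonoidAlgebra`. -/
noncomputable def nuR : AddMonoidAlgebra ℝ ℤ :=
  single 1 2 + single 2 2 - single 3 1 + single 4 2 + single 5 2

namespace LaurentPolynomial

-- Numerals in `ℤ` are built with core's `instOfNat`, which `no_index` lets simp match.
theorem T_ofNat {R : Type*} [Semiring R] (n : ℕ) [n.AtLeastTwo] :
    (T (no_index (@OfNat.ofNat ℤ n instOfNat)) : R[T;T⁻¹]) = T 1 ^ (OfNat.ofNat n : ℕ) := by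
  rw [T_pow, mul_one]
  rfl

end LaurentPolynomial

open LaurentPolynomial in
theorem nuR_mul_self :
    nuR * nuR
      = single 2 4 + single 3 8 + single 5 4 + single 6 17 + single 7 4
        + single 9 8 + single 10 4 := by
  simp only [nuR, single_eq_C_mul_T, T_ofNat, map_ofNat, map_one]
  ring

/-- `ν*² = 4δ₂ + 8δ₃ + 4δ₅ + 17δ₆ + 4δ₇ + 8δ₉ + 4δ₁₀`, and in particular the
convolution square `ν*²` is non-negative. -/
theorem nu_conv_sq :
    nuR * nuR
      = single 2 4 + single 3 8 + single 5 4 + single 6 17 + single 7 4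
        + single 9 8 + single 10 4
    ∧ ∀ n : ℤ, 0 ≤ (nuR * nuR).coeff n := by
  refine ⟨nuR_mul_self, fun n => ?_⟩
  suffices 0 ≤ (nuR * nuR).coeff from this n
  simp only [nuR_mul_self, coeff_add, coeff_single]
  repeat' apply add_nonneg
  all_goals exact Finsupp.single_nonneg.2 (by norm_num)
end
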